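/- arXiv:2203.03532 — 3 statements merged into one kernel-verified Lean document; each statement's English description precedes it below -/
import Mathlib

section
/- If M = {M_n} is a nonnegative adapted process such that E[M_τ] ≤ E[τ] for every stopping time τ (an e-detector), then for any α ∈ (0,1), the stopping time N* := inf{n ≥ 1 : M_n ≥ 1/α} satisfies E[N*] ≥ 1/α. -/
open MeasureTheory Filter
open scoped ENNReal

noncomputable section

/-- A stopping time (possibly infinite, valued in `ℕ∞`) with respect to a filtration. -/
def IsStoppingTimeENat {Ω : Type*} {m0 : MeasurableSpace Ω}
    (𝒢 : Filtration ℕ m0) (τ : Ω → ℕ∞) : Prop :=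
  ∀ n : ℕ, MeasurableSet[𝒢 n] {ω | τ ω ≤ (n : ℕ∞)}

/-- The value of a process at a stopping time, with `limsup` at infinity. -/
def stoppedVal {Ω : Type*} (M : ℕ → Ω → ℝ≥0∞) (τ : Ω → ℕ∞) (ω : Ω) : ℝ≥0∞ :=
  if τ ω = ⊤ then limsup (fun n => M n ω) atTop else M (τ ω).toNat ω

/-- An e-detector: a nonnegative adapted process with `E[M_τ] ≤ E[τ]` for all stopping times. -/
def IsEDetector {Ω : Type*} {m0 : MeasurableSpace Ω}
    (𝒢 : Filtration ℕ m0) (μ : Measure Ω) (M : ℕ → Ω → ℝ≥0∞) : Prop :=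
  (∀ n, Measurable[𝒢 n] (M n)) ∧
  ∀ τ : Ω → ℕ∞, IsStoppingTimeENat 𝒢 τ →
    ∫⁻ ω, stoppedVal M τ ω ∂μ ≤ ∫⁻ ω, (τ ω : ℝ≥0∞) ∂μ

/-- ARL control: thresholding an e-detector at `1/α` gives a stopping rule with
mean at least `1/α`. -/
theorem stmt0 {Ω : Type*} {m0 : MeasurableSpace Ω} (μ : Measure Ω) [IsProbabilityMeasure μ]
    (𝒢 : Filtration ℕ m0) (M : ℕ → Ω → ℝ≥0∞)
    (hM : IsEDetector 𝒢 μ M) (α : ℝ) (hα : α ∈ Set.Ioo (0:ℝ) 1) :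
    ENNReal.ofReal (1/α) ≤
      ∫⁻ ω, ((sInf {n : ℕ∞ | ∃ m : ℕ, n = (m : ℕ∞) ∧ 1 ≤ m ∧
        ENNReal.ofReal (1/α) ≤ M m ω} : ℕ∞) : ℝ≥0∞) ∂μ := by
  set c := ENNReal.ofReal (1/α) with hc
  set τ : Ω → ℕ∞ := fun ω => sInf {n : ℕ∞ | ∃ m : ℕ, n = (m : ℕ∞) ∧ 1 ≤ m ∧ c ≤ M m ω} with hτ
  -- characterization of τ ≤ n
  have hchar : ∀ (n : ℕ) (ω : Ω), τ ω ≤ (n : ℕ∞) ↔ ∃ m : ℕ, m ≤ n ∧ 1 ≤ m ∧ c ≤ M m ω := by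
    intro n ω
    constructor
    · intro h
      have hne : {k : ℕ∞ | ∃ m : ℕ, k = (m : ℕ∞) ∧ 1 ≤ m ∧ c ≤ M m ω}.Nonempty := by
        by_contra hne
        rw [Set.not_nonempty_iff_eq_empty] at hne
        have hteq : τ ω = ⊤ := by
          show sInf _ = ⊤
          rw [hne, sInf_empty]
        rw [hteq] at h
        exact (ENat.coe_lt_top n).not_ge h
      obtain ⟨m, hm, h1, h2⟩ := csInf_mem hne
      refine ⟨m, ?_, h1, h2⟩
      rw [show τ ω = (m : ℕ∞) from hm] at h
      exact_mod_cast h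
    · rintro ⟨m, hmn, h1, h2⟩
      calc τ ω ≤ (m : ℕ∞) := csInf_le' ⟨m, rfl, h1, h2⟩
        _ ≤ (n : ℕ∞) := by exact_mod_cast hmn
  have hst : IsStoppingTimeENat 𝒢 τ := by
    intro n
    have : {ω | τ ω ≤ (n : ℕ∞)} = ⋃ m ∈ Finset.range (n+1), {ω | 1 ≤ m ∧ c ≤ M m ω} := by
      ext ω
      simp only [Set.mem_setOf_eq, hchar, Set.mem_iUnion, Finset.mem_range]
      constructor
      · rintro ⟨m, h1, h2, h3⟩; exact ⟨m, Nat.lt_succ_of_le h1, h2, h3⟩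
      · rintro ⟨m, h1, h2, h3⟩; exact ⟨m, Nat.lt_succ_iff.mp h1, h2, h3⟩
    rw [this]
    refine MeasurableSet.biUnion (Finset.range (n+1)).countable_toSet (fun m hm => ?_)
    rcases Nat.eq_zero_or_pos m with h0 | h0
    · subst h0; simp
    · have : {ω | 1 ≤ m ∧ c ≤ M m ω} = {ω | c ≤ M m ω} := by
        ext ω
        simp only [Set.mem_setOf_eq]
        exact ⟨fun h => h.2, fun h => ⟨h0, h⟩⟩
      rw [this]
      exact 𝒢.mono (Nat.lt_succ_iff.mp (Finset.mem_range.mp hm)) _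
        (measurableSet_le measurable_const (hM.1 m))
  have key := hM.2 τ hst
  -- measurability of {τ = ⊤}
  have hmeasle : ∀ n : ℕ, MeasurableSet {ω | τ ω ≤ (n : ℕ∞)} :=
    fun n => 𝒢.le n _ (hst n)
  have htop : MeasurableSet {ω | τ ω = ⊤} := by
    have : {ω | τ ω = ⊤} = ⋂ n : ℕ, {ω | τ ω ≤ (n : ℕ∞)}ᶜ := by
      ext ω
      simp only [Set.mem_setOf_eq, Set.mem_iInter, Set.mem_compl_iff]
      constructor
      · intro h n hn; rw [h] at hn; exact (ENat.coe_lt_top n).not_ge hn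
      · intro h
        by_contra hne
        obtain ⟨n, hn⟩ := WithTop.ne_top_iff_exists.mp hne
        exact h n (le_of_eq hn.symm)
    rw [this]
    exact MeasurableSet.iInter (fun n => (hmeasle n).compl)
  by_cases hI : ∫⁻ ω, ((τ ω : ℕ∞) : ℝ≥0∞) ∂μ = ⊤
  · rw [hτ] at hI; rw [hI]; exact le_top
  · -- τ < ⊤ a.e.
    have hae : μ {ω | τ ω = ⊤} = 0 := by
      by_contra h0
      apply hI
      have hsub : ∀ ω ∈ {ω | τ ω = ⊤}, ((τ ω : ℝ≥0∞)) = ⊤ := by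
        intro ω hω
        have : τ ω = ⊤ := hω
        rw [this]; simp
      have : ∫⁻ ω, ((τ ω : ℕ∞) : ℝ≥0∞) ∂μ ≥ ∫⁻ ω in {ω | τ ω = ⊤}, ((τ ω : ℕ∞) : ℝ≥0∞) ∂μ :=
        setLIntegral_le_lintegral _ _
      rw [eq_top_iff]
      refine le_trans ?_ this
      rw [setLIntegral_congr_fun htop hsub]
      simp [h0]
  -- lower bound on the stopped value
    have hlow : ∀ᵐ ω ∂μ, c ≤ stoppedVal M τ ω := by
      rw [ae_iff]
      refine measure_mono_null ?_ hae
      intro ω hω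
      simp only [Set.mem_setOf_eq, not_le] at hω ⊢
      by_contra htop'
      have hne : {k : ℕ∞ | ∃ m : ℕ, k = (m : ℕ∞) ∧ 1 ≤ m ∧ c ≤ M m ω}.Nonempty := by
        by_contra hne
        rw [Set.not_nonempty_iff_eq_empty] at hne
        exact htop' (by simp [hτ, hne])
      obtain ⟨m, hm, h1, h2⟩ := csInf_mem hne
      have hτω : τ ω = (m : ℕ∞) := hm
      have : stoppedVal M τ ω = M m ω := by
        rw [stoppedVal, if_neg htop', hτω]; simp
      rw [this] at hω
      exact hω.not_ge h2
    calc c = c * μ Set.univ := by simp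
      _ = ∫⁻ _, c ∂μ := by rw [lintegral_const]
      _ ≤ ∫⁻ ω, stoppedVal M τ ω ∂μ := lintegral_mono_ae hlow
      _ ≤ ∫⁻ ω, ((τ ω : ℕ∞) : ℝ≥0∞) ∂μ := key
end
end

section
/- The Shiryaev-Roberts e-detector built from e_j-processes is an e-detector: if for each j ≥ 1, Λ^(j) is a nonnegative adapted process with Λ^(j)_n = 1 for n < j and E[Λ^(j)_τ | F_{j-1}] ≤ 1 for all stopping times τ, then the process M^SR_n := Σ_{j=1}^n Λ^(j)_n satisfies E[M^SR_τ] ≤ E[τ] for every stopping time τ. -/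
open MeasureTheory Filter
open scoped ENNReal

noncomputable section

/-!
On `{τ < ∞}` the stopped Shiryaev–Roberts statistic is `∑ⱼ 1{j < τ} Λ^(j+1)_τ`, and `τ` itself is
`∑ⱼ 1{j < τ}`. Since `{j < τ} ∈ 𝒢 j`, the `e_{j+1}`-property bounds the expectation of the `j`-th
term by `P(j < τ)`, and summing over `j` gives `E[τ]`. If `P(τ = ∞) > 0` then `E[τ] = ∞`.
-/

section

variable {Ω : Type*} {m0 : MeasurableSpace Ω} {𝒢 : Filtration ℕ m0} {τ : Ω → ℕ∞}

/- `IsStoppingTimeENat` unfolds to `IsStoppingTime`, but Mathlib's `IsStoppingTime.measurable'`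
concerns the Borel structure of `WithTop ℕ`, not the discrete one of `ℕ∞`. -/
lemma IsStoppingTimeENat.measurable (hτ : IsStoppingTimeENat 𝒢 τ) : Measurable τ :=
  measurable_to_countable' fun x => by
    induction x using ENat.recTopCoe with
    | top => exact IsStoppingTime.measurableSet_eq_top hτ
    | coe n => exact 𝒢.le n _ (IsStoppingTime.measurableSet_eq hτ n)

lemma IsStoppingTimeENat.measurableSet_gt (hτ : IsStoppingTimeENat 𝒢 τ) (n : ℕ) :
    MeasurableSet[𝒢 n] {ω | (n : ℕ∞) < τ ω} :=
  IsStoppingTime.measurableSet_gt hτ n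

lemma measurable_stoppedVal {f : ℕ → Ω → ℝ≥0∞} (hf : ∀ n, Measurable (f n))
    (hτ : Measurable τ) : Measurable (stoppedVal f τ) := by
  have hf' : Measurable fun p : ℕ × Ω => f p.1 p.2 := measurable_from_prod_countable_right hf
  exact Measurable.ite (hτ (measurableSet_singleton ⊤)) (Measurable.limsup hf)
    (hf'.comp ((measurable_of_countable ENat.toNat).comp hτ |>.prodMk measurable_id))

lemma ENat.toENNReal_eq_tsum_ite_lt (n : ℕ∞) :
    (n : ℝ≥0∞) = ∑' j : ℕ, if (j : ℕ∞) < n then 1 else 0 := by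
  induction n using ENat.recTopCoe with
  | top => simp
  | coe m =>
    rw [tsum_eq_sum (s := Finset.range m) fun j hj => by simpa using hj]
    simp [Finset.sum_boole, Finset.filter_true_of_mem fun j => Finset.mem_range.mp]

lemma lintegral_enat_eq_tsum_measure_lt (μ : Measure Ω) (hτ : Measurable τ) :
    ∫⁻ ω, (τ ω : ℝ≥0∞) ∂μ = ∑' j : ℕ, μ {ω | (j : ℕ∞) < τ ω} := by
  have hlt (j : ℕ) : MeasurableSet {ω | (j : ℕ∞) < τ ω} := hτ (.of_discrete (s := Set.Ioi (j : ℕ∞)))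
  calc ∫⁻ ω, (τ ω : ℝ≥0∞) ∂μ
      = ∫⁻ ω, ∑' j : ℕ, {ω | (j : ℕ∞) < τ ω}.indicator 1 ω ∂μ := by
        congr with ω
        simp only [ENat.toENNReal_eq_tsum_ite_lt, Set.indicator_apply, Set.mem_ofPred_eq,
          Pi.one_apply]
    _ = ∑' j : ℕ, μ {ω | (j : ℕ∞) < τ ω} := by
        rw [lintegral_tsum fun j => (measurable_one.indicator (hlt j)).aemeasurable]
        simp only [lintegral_indicator_one (hlt _)]

lemma stoppedVal_sum_Icc_eq_tsum_indicator (Λ : ℕ → ℕ → Ω → ℝ≥0∞) {ω : Ω} (hω : τ ω ≠ ⊤) :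
    stoppedVal (fun n ω => ∑ j ∈ Finset.Icc 1 n, Λ j n ω) τ ω
      = ∑' j : ℕ, {ω | (j : ℕ∞) < τ ω}.indicator (stoppedVal (Λ (j + 1)) τ) ω := by
  obtain ⟨m, hm⟩ := ENat.ne_top_iff_exists.mp hω
  simp only [stoppedVal, Set.indicator_apply, Set.mem_ofPred_eq, ← hm, ENat.natCast_ne_top,
    if_false, ENat.toNat_natCast, Nat.cast_lt]
  rw [tsum_eq_sum (s := Finset.range m) fun j hj => if_neg (by simpa using hj),
    Finset.sum_ite_of_true fun j hj => Finset.mem_range.mp hj, ← Finset.Ico_add_one_right_eq_Icc,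
    Finset.sum_Ico_eq_sum_range]
  simp only [add_tsub_cancel_right, add_comm]

end

theorem stmt3_general {Ω : Type*} {m0 : MeasurableSpace Ω} (μ : Measure Ω)
    (𝒢 : Filtration ℕ m0) (Λ : ℕ → ℕ → Ω → ℝ≥0∞)
    (hadapt : ∀ j n, Measurable[𝒢 n] (Λ j n))
    (hej : ∀ j, 1 ≤ j → ∀ τ : Ω → ℕ∞, IsStoppingTimeENat 𝒢 τ →
      ∀ A : Set Ω, MeasurableSet[𝒢 (j - 1)] A →
        ∫⁻ ω in A, stoppedVal (Λ j) τ ω ∂μ ≤ μ A) :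
    ∀ τ : Ω → ℕ∞, IsStoppingTimeENat 𝒢 τ →
      ∫⁻ ω, stoppedVal (fun n ω => ∑ j ∈ Finset.Icc 1 n, Λ j n ω) τ ω ∂μ
        ≤ ∫⁻ ω, (τ ω : ℝ≥0∞) ∂μ := by
  intro τ hτ
  have hτm := hτ.measurable
  obtain hinf | hfin := ne_or_eq (μ {ω | τ ω = ⊤}) 0
  · have hτ' : Measurable fun ω => (τ ω : ℝ≥0∞) := (measurable_of_countable _).comp hτm
    rw [lintegral_eq_top_of_measure_eq_top_ne_zero hτ'.aemeasurable
      (by simpa only [ENat.toENNReal_eq_top] using hinf)]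
    exact le_top
  have hlt (j : ℕ) : MeasurableSet {ω | (j : ℕ∞) < τ ω} := 𝒢.le j _ (hτ.measurableSet_gt j)
  have hΛ (j : ℕ) : Measurable (stoppedVal (Λ j) τ) :=
    measurable_stoppedVal (fun n => (hadapt j n).mono (𝒢.le n) le_rfl) hτm
  calc ∫⁻ ω, stoppedVal (fun n ω => ∑ j ∈ Finset.Icc 1 n, Λ j n ω) τ ω ∂μ
      = ∫⁻ ω, ∑' j : ℕ, {ω | (j : ℕ∞) < τ ω}.indicator (stoppedVal (Λ (j + 1)) τ) ω ∂μ := by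
        refine lintegral_congr_ae ?_
        filter_upwards [measure_eq_zero_iff_ae_notMem.mp hfin] with ω hω
        exact stoppedVal_sum_Icc_eq_tsum_indicator Λ hω
    _ = ∑' j : ℕ, ∫⁻ ω in {ω | (j : ℕ∞) < τ ω}, stoppedVal (Λ (j + 1)) τ ω ∂μ := by
        rw [lintegral_tsum fun j => ((hΛ (j + 1)).indicator (hlt j)).aemeasurable]
        simp only [lintegral_indicator (hlt _)]
    _ ≤ ∑' j : ℕ, μ {ω | (j : ℕ∞) < τ ω} :=
        ENNReal.tsum_le_tsum fun j =>
          hej (j + 1) (Nat.le_add_left 1 j) τ hτ _ (hτ.measurableSet_gt j)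
    _ = ∫⁻ ω, (τ ω : ℝ≥0∞) ∂μ := (lintegral_enat_eq_tsum_measure_lt μ hτm).symm

/-- The Shiryaev–Roberts e-detector built from e_j-processes is an e-detector. -/
theorem stmt3 {Ω : Type*} {m0 : MeasurableSpace Ω} (μ : Measure Ω) [IsProbabilityMeasure μ]
    (𝒢 : Filtration ℕ m0) (Λ : ℕ → ℕ → Ω → ℝ≥0∞)
    (hadapt : ∀ j n, Measurable[𝒢 n] (Λ j n))
    (hinit : ∀ j n, n < j → ∀ ω, Λ j n ω = 1)
    (hej : ∀ j, 1 ≤ j → ∀ τ : Ω → ℕ∞, IsStoppingTimeENat 𝒢 τ →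
      ∀ A : Set Ω, MeasurableSet[𝒢 (j - 1)] A →
        ∫⁻ ω in A, stoppedVal (Λ j) τ ω ∂μ ≤ μ A) :
    ∀ τ : Ω → ℕ∞, IsStoppingTimeENat 𝒢 τ →
      ∫⁻ ω, stoppedVal (fun n ω => ∑ j ∈ Finset.Icc 1 n, Λ j n ω) τ ω ∂μ
        ≤ ∫⁻ ω, (τ ω : ℝ≥0∞) ∂μ :=
  stmt3_general μ 𝒢 Λ hadapt hej
end
end

section
/- Sub-exponential lower bound on the linear betting capital: for all x ∈ [0,1], m ∈ (0,1], and λ ∈ (0,1), exp{λ(x/m − 1) − ψ_E(λ)(x/m − 1)²} ≤ 1 + λ(x/m − 1), where ψ_E(λ) := −log(1−λ) − λ. -/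
open Real

lemma lemShift {l : ℝ} (hl0 : 0 ≤ l) (hl1 : l < 1) :
    HasSum (fun n : ℕ => l ^ (n + 2) / (n + 2)) (-Real.log (1 - l) - l) := by
  have h := Real.hasSum_pow_div_log_of_abs_lt_one (x := l) (by rw [abs_of_nonneg hl0]; exact hl1)
  have h2 := (hasSum_nat_add_iff' (f := fun n : ℕ => l ^ (n + 1) / (n + 1)) 1).2 h
  simp only [Finset.range_one, Finset.sum_singleton] at h2
  convert h2 using 2 with n
  · rfl
  · push_cast; ring_nf
  · norm_num

lemma lemB {l : ℝ} (hl0 : 0 ≤ l) (hl1 : l < 1) : l ^ 2 / 2 ≤ -Real.log (1 - l) - l := by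
  have h := lemShift hl0 hl1
  have := le_hasSum h 0 (fun n _ => by positivity)
  simpa using this

lemma lemA {t : ℝ} (ht : 0 ≤ t) : t - t ^ 2 / 2 ≤ Real.log (1 + t) := by
  have h1t : (0:ℝ) < 1 + t := by linarith
  set r := t / (1 + t) with hr
  have hr0 : 0 ≤ r := by positivity
  have hr1 : r < 1 := by rw [hr, div_lt_one h1t]; linarith
  have hlog : Real.log (1 + t) = -Real.log (1 - r) := by
    rw [hr, show 1 - t / (1 + t) = (1 + t)⁻¹ by field_simp; ring, Real.log_inv]
    ring
  have h := Real.hasSum_pow_div_log_of_abs_lt_one (x := r) (by rw [abs_of_nonneg hr0]; exact hr1)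
  have hge : r + r ^ 2 / 2 ≤ -Real.log (1 - r) := by
    have := sum_le_hasSum (Finset.range 2) (fun n _ => by positivity) h
    simp [Finset.sum_range_succ] at this
    linarith
  have key : t - t ^ 2 / 2 ≤ r + r ^ 2 / 2 := by
    rw [hr, ← sub_nonneg]
    have heq : t / (1 + t) + (t / (1 + t)) ^ 2 / 2 - (t - t ^ 2 / 2)
        = t ^ 4 / (2 * (1 + t) ^ 2) := by
      field_simp
      ring
    rw [heq]
    positivity
  rw [hlog]
  linarith

lemma lemC {l s : ℝ} (hl0 : 0 < l) (hl1 : l < 1) (hs0 : 0 ≤ s) (hs1 : s ≤ 1) :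
    -Real.log (1 - l * s) ≤ l * s + (-Real.log (1 - l) - l) * s ^ 2 := by
  have hls0 : 0 ≤ l * s := by positivity
  have hls1 : l * s < 1 := lt_of_le_of_lt (by nlinarith) hl1
  have h1 := lemShift hls0 hls1
  have h2 := (lemShift hl0.le hl1).mul_left (s ^ 2)
  have hle : -Real.log (1 - l * s) - l * s ≤ s ^ 2 * (-Real.log (1 - l) - l) := by
    refine hasSum_le (fun n => ?_) h1 h2
    have hsp : s ^ (n + 2) ≤ s ^ 2 := pow_le_pow_of_le_one hs0 hs1 (by omega)
    have hkey : (l * s) ^ (n + 2) ≤ s ^ 2 * l ^ (n + 2) := by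
      rw [mul_pow]
      calc l ^ (n+2) * s ^ (n+2) ≤ l ^ (n+2) * s ^ 2 :=
            mul_le_mul_of_nonneg_left hsp (by positivity)
        _ = s ^ 2 * l ^ (n+2) := by ring
    rw [← mul_div_assoc]
    gcongr
  linarith [hle]

/-- Sub-exponential lower bound on the linear betting capital (Fan–Grama–Liu):
for `x ∈ [0,1]`, `m ∈ (0,1]`, `λ ∈ (0,1)`,
`exp{λ(x/m - 1) - ψ_E(λ)(x/m - 1)²} ≤ 1 + λ(x/m - 1)`,
where `ψ_E(λ) = -log(1-λ) - λ`. -/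
theorem stmt13 (x m lam : ℝ) (hx : x ∈ Set.Icc (0 : ℝ) 1) (hm : m ∈ Set.Ioc (0 : ℝ) 1)
    (hlam : lam ∈ Set.Ioo (0 : ℝ) 1) :
    Real.exp (lam * (x / m - 1) - (-Real.log (1 - lam) - lam) * (x / m - 1) ^ 2)
      ≤ 1 + lam * (x / m - 1) := by
  obtain ⟨hx0, hx1⟩ := hx
  obtain ⟨hm0, hm1⟩ := hm
  obtain ⟨hl0, hl1⟩ := hlam
  set u := x / m - 1 with hu
  have hxm : 0 ≤ x / m := div_nonneg hx0 hm0.le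
  have hu1 : -1 ≤ u := by rw [hu]; linarith
  clear_value u
  have hpos : 0 < 1 + lam * u := by nlinarith
  rw [← Real.exp_log hpos, Real.exp_le_exp]
  rcases le_or_gt 0 u with hu0 | hu0
  · have hA := lemA (t := lam * u) (by positivity)
    have hB := mul_le_mul_of_nonneg_right (lemB hl0.le hl1) (sq_nonneg u)
    have hsq : (lam * u) ^ 2 = lam ^ 2 * u ^ 2 := by ring
    nlinarith [hA, hB, hsq]
  · set s := -u with hs
    have hs0 : 0 ≤ s := by rw [hs]; linarith
    have hs1 : s ≤ 1 := by rw [hs]; linarith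
    have hC := lemC hl0 hl1 hs0 hs1
    have h1 : 1 + lam * u = 1 - lam * s := by rw [hs]; ring
    have h2 : u ^ 2 = s ^ 2 := by rw [hs]; ring
    have h3 : lam * u = -(lam * s) := by rw [hs]; ring
    rw [h1, h2]
    have hneg := neg_le_neg hC
    rw [neg_neg] at hneg
    linarith [hneg, h3]
end
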